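/- arXiv:2311.10528 — 3 statements merged into one kernel-verified Lean document; each statement's English description precedes it below -/
import Mathlib

section
/- Let n ≥ 3 and k_1,…,k_n > 0. Then there exists a unique k' > 1 such that Σ_{i=1}^n 2·arctan(√((k')²−1)/k_i) = 2π. -/
/-!
The total cone angle `k' ↦ ∑ᵢ 2 arctan(√(k'² − 1)/kᵢ)` is continuous and strictly increasing
on `[1, ∞)`, vanishes at `k' = 1` and tends to `n π` as `k' → ∞`. Since `0 < 2π < nπ` for
`n ≥ 3`, the intermediate value theorem gives a `k'` with total angle `2π` and `k' > 1`, and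
strict monotonicity makes it unique.
-/

open Real Filter Topology Set

theorem StrictMonoOn.existsUnique_gt_eq_of_eventually_lt {f : ℝ → ℝ} {a y : ℝ}
    (hcont : ContinuousOn f (Ici a)) (hmono : StrictMonoOn f (Ici a)) (hay : f a < y)
    (hlarge : ∀ᶠ x in atTop, y < f x) : ∃! x, a < x ∧ f x = y := by
  obtain ⟨b, hyb, hab⟩ := (hlarge.and (eventually_gt_atTop a)).exists
  obtain ⟨x, hx, rfl⟩ := intermediate_value_Ioo hab.le (hcont.mono Icc_subset_Ici_self) ⟨hay, hyb⟩
  refine ⟨x, ⟨hx.1, rfl⟩, fun z ⟨haz, hz⟩ => ?_⟩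
  exact hmono.injOn (mem_Ici.mpr haz.le) (mem_Ici.mpr hx.1.le) hz

noncomputable def innerAngle (c x : ℝ) : ℝ := 2 * arctan (√(x ^ 2 - 1) / c)

noncomputable def totalConeAngle {ι : Type*} [Fintype ι] (k : ι → ℝ) (x : ℝ) : ℝ :=
  ∑ i, innerAngle (k i) x

@[simp]
theorem innerAngle_one (c : ℝ) : innerAngle c 1 = 0 := by
  simp [innerAngle]

theorem continuous_innerAngle (c : ℝ) : Continuous (innerAngle c) := by
  unfold innerAngle
  fun_prop

theorem strictMonoOn_innerAngle {c : ℝ} (hc : 0 < c) : StrictMonoOn (innerAngle c) (Ici 1) := by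
  intro a (ha : 1 ≤ a) b _ hab
  have hsqrt : √(a ^ 2 - 1) < √(b ^ 2 - 1) := sqrt_lt_sqrt (by nlinarith) (by nlinarith)
  have harctan := arctan_strictMono ((div_lt_div_iff_of_pos_right hc).mpr hsqrt)
  unfold innerAngle
  linarith

theorem tendsto_innerAngle_atTop {c : ℝ} (hc : 0 < c) :
    Tendsto (innerAngle c) atTop (𝓝 π) := by
  have hratio : Tendsto (fun x : ℝ => √(x ^ 2 - 1) / c) atTop atTop :=
    (tendsto_sqrt_atTop.comp
      (tendsto_atTop_add_const_right _ (-1) (tendsto_pow_atTop two_ne_zero))).atTop_div_const hc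
  have harctan := (tendsto_arctan_atTop.mono_right nhdsWithin_le_nhds).comp hratio
  unfold innerAngle
  simpa [mul_div_cancel₀] using harctan.const_mul 2

section totalConeAngle

variable {ι : Type*} [Fintype ι] {k : ι → ℝ}

@[simp]
theorem totalConeAngle_one (k : ι → ℝ) : totalConeAngle k 1 = 0 := by
  simp [totalConeAngle]

theorem continuous_totalConeAngle (k : ι → ℝ) : Continuous (totalConeAngle k) :=
  continuous_finsetSum _ fun i _ => continuous_innerAngle (k i)

theorem strictMonoOn_totalConeAngle [Nonempty ι] (hk : ∀ i, 0 < k i) :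
    StrictMonoOn (totalConeAngle k) (Ici 1) := fun _ ha _ hb hab =>
  Finset.sum_lt_sum_of_nonempty Finset.univ_nonempty fun i _ =>
    strictMonoOn_innerAngle (hk i) ha hb hab

theorem tendsto_totalConeAngle_atTop (hk : ∀ i, 0 < k i) :
    Tendsto (totalConeAngle k) atTop (𝓝 (Fintype.card ι * π)) := by
  unfold totalConeAngle
  simpa using tendsto_finsetSum Finset.univ fun i _ => tendsto_innerAngle_atTop (hk i)

end totalConeAngle

/-- For `n ≥ 3` and positive geodesic curvatures `k_1, …, k_n`, there exists a unique
`k' > 1` such that `∑ i, 2 · arctan(√((k')² − 1)/k_i) = 2π`. -/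
theorem stmt3 (n : ℕ) (hn : 3 ≤ n) (k : Fin n → ℝ) (hk : ∀ i, 0 < k i) :
    ∃! k' : ℝ, 1 < k' ∧
      ∑ i : Fin n, 2 * Real.arctan (Real.sqrt (k' ^ 2 - 1) / k i) = 2 * Real.pi := by
  have : Nonempty (Fin n) := ⟨⟨0, by omega⟩⟩
  have h2π_lt : 2 * π < Fintype.card (Fin n) * π := by
    rw [Fintype.card_fin]
    have : (3 : ℝ) ≤ n := by exact_mod_cast hn
    nlinarith [pi_pos]
  exact (strictMonoOn_totalConeAngle hk).existsUnique_gt_eq_of_eventually_lt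
    (continuous_totalConeAngle k).continuousOn (by simp [pi_pos])
    ((tendsto_totalConeAngle_atTop hk).eventually (eventually_gt_nhds h2π_lt))
end

section
/- Let n ≥ 3 and define F: ℝ₊ⁿ × (1,∞) → ℝ by F(k_1,…,k_n; k') = Σ_{i=1}^n 2·arctan(√((k')²−1)/k_i) − 2π. Then the unique solution k_P(k_1,…,k_n) of F = 0 is a C¹ function of (k_1,…,k_n), with ∂k_P/∂k_i > 0 for each i. -/
/-!
Substituting `s = √(k'² - 1)`, the equation `F = 0` becomes `∑ i, arctan (s / k i) = π`. For
positive `k` the left side increases strictly from `0` to `n π / 2 > π` on `[0, ∞)`, so it has a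
unique positive root `s(k)`. Its `s`-derivative `∑ i, k i / (k i ^ 2 + s ^ 2)` is positive, so the
implicit function theorem makes `s` smooth, and implicit differentiation gives
`∂s/∂k_i = (s / (k_i² + s²)) / ∑ j, k_j / (k_j² + s²) > 0`. Finally `k_P = √(s² + 1)`.
-/

open Real Filter Topology Function
open scoped ContDiff

theorem ContinuousLinearMap.isInvertible_of_apply_one_ne_zero {𝕜 : Type*} [Field 𝕜]
    [TopologicalSpace 𝕜] [IsTopologicalRing 𝕜] {f : 𝕜 →L[𝕜] 𝕜} (hf : f 1 ≠ 0) :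
    f.IsInvertible :=
  ⟨ContinuousLinearEquiv.unitsEquivAut 𝕜 (Units.mk0 _ hf),
    ContinuousLinearMap.ext_ring (by simp)⟩

theorem HasDerivAt.arctan_div {u v : ℝ → ℝ} {u' v' x : ℝ} (hu : HasDerivAt u u' x)
    (hv : HasDerivAt v v' x) (hx : v x ≠ 0) :
    HasDerivAt (fun t => Real.arctan (u t / v t))
      ((u' * v x - u x * v') / (v x ^ 2 + u x ^ 2)) x := by
  convert (hu.fun_div hv hx).arctan using 1
  field_simp

namespace CirclePacking

variable {ι : Type*} [Fintype ι]

noncomputable def angleSum (k : ι → ℝ) (s : ℝ) : ℝ := ∑ i, arctan (s / k i)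

@[simp]
theorem angleSum_zero (k : ι → ℝ) : angleSum k 0 = 0 := by simp [angleSum]

theorem continuous_angleSum (k : ι → ℝ) : Continuous (angleSum k) := by
  unfold angleSum; fun_prop

theorem strictMono_angleSum [Nonempty ι] {k : ι → ℝ} (hk : ∀ i, 0 < k i) :
    StrictMono (angleSum k) := fun _ _ hst =>
  Finset.sum_lt_sum_of_nonempty Finset.univ_nonempty fun i _ =>
    arctan_strictMono (div_lt_div_of_pos_right hst (hk i))

theorem tendsto_angleSum_atTop {k : ι → ℝ} (hk : ∀ i, 0 < k i) :
    Tendsto (angleSum k) atTop (𝓝 (Fintype.card ι * (π / 2))) := by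
  have h := tendsto_finsetSum Finset.univ fun i _ =>
    (tendsto_arctan_atTop.mono_right nhdsWithin_le_nhds).comp
      (tendsto_id.atTop_div_const (hk i))
  unfold angleSum
  simpa [Function.comp_def] using h

theorem exists_angleSum_eq_pi (hι : 2 < Fintype.card ι) {k : ι → ℝ} (hk : ∀ i, 0 < k i) :
    ∃ s, 0 < s ∧ angleSum k s = π := by
  have hlim : π < Fintype.card ι * (π / 2) := by
    have : (3 : ℝ) ≤ Fintype.card ι := by exact_mod_cast hι
    nlinarith [pi_pos]
  obtain ⟨M, hM, hM0⟩ := (((tendsto_angleSum_atTop hk).eventually (eventually_gt_nhds hlim)).and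
    (eventually_gt_atTop 0)).exists
  obtain ⟨s, hs, hsπ⟩ := intermediate_value_Ioo hM0.le (continuous_angleSum k).continuousOn
    (show π ∈ Set.Ioo (angleSum k 0) (angleSum k M) from ⟨by simp [pi_pos], hM⟩)
  exact ⟨s, hs.1, hsπ⟩

noncomputable def angleRoot (k : ι → ℝ) : ℝ :=
  Classical.epsilon fun s => 0 < s ∧ angleSum k s = π

theorem angleRoot_pos (hι : 2 < Fintype.card ι) {k : ι → ℝ} (hk : ∀ i, 0 < k i) :
    0 < angleRoot k :=
  (Classical.epsilon_spec (exists_angleSum_eq_pi hι hk)).1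

theorem angleSum_angleRoot (hι : 2 < Fintype.card ι) {k : ι → ℝ} (hk : ∀ i, 0 < k i) :
    angleSum k (angleRoot k) = π :=
  (Classical.epsilon_spec (exists_angleSum_eq_pi hι hk)).2

theorem eq_angleRoot_of_angleSum_eq (hι : 2 < Fintype.card ι) {k : ι → ℝ} (hk : ∀ i, 0 < k i)
    {s : ℝ} (hs : angleSum k s = π) : s = angleRoot k :=
  have : Nonempty ι := Fintype.card_pos_iff.mp (by omega)
  (strictMono_angleSum hk).injective (hs.trans (angleSum_angleRoot hι hk).symm)

theorem hasDerivAt_angleSum {k : ι → ℝ} (hk : ∀ i, k i ≠ 0) (s : ℝ) :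
    HasDerivAt (angleSum k) (∑ i, k i / (k i ^ 2 + s ^ 2)) s := by
  refine (HasDerivAt.fun_sum (u := .univ) fun i _ =>
    (hasDerivAt_id' s).arctan_div (hasDerivAt_const s (k i)) (hk i)).congr_deriv ?_
  simp

theorem sum_div_sq_add_sq_pos [Nonempty ι] {k : ι → ℝ} (hk : ∀ i, 0 < k i) (s : ℝ) :
    0 < ∑ i, k i / (k i ^ 2 + s ^ 2) :=
  Finset.sum_pos (fun i _ => have := hk i; by positivity) Finset.univ_nonempty

theorem contDiffAt_angleSum_uncurry {n : WithTop ℕ∞} {k : ι → ℝ} (hk : ∀ i, k i ≠ 0) (s : ℝ) :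
    ContDiffAt ℝ n (fun p : (ι → ℝ) × ℝ => angleSum p.1 p.2) (k, s) :=
  ContDiffAt.sum fun i _ => contDiff_arctan.contDiffAt.comp _ <|
    contDiffAt_snd.div (by fun_prop) (hk i)

theorem eventually_pos_nhds {k : ι → ℝ} (hk : ∀ i, 0 < k i) : ∀ᶠ k' in 𝓝 k, ∀ i, 0 < k' i :=
  eventually_all.2 fun i => (continuous_apply i).continuousAt.eventually (lt_mem_nhds (hk i))

theorem contDiffAt_angleRoot (hι : 2 < Fintype.card ι) {k : ι → ℝ} (hk : ∀ i, 0 < k i) :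
    ContDiffAt ℝ ω angleRoot k := by
  set G : (ι → ℝ) × ℝ → ℝ := fun p => angleSum p.1 p.2
  have hG : ContDiffAt ℝ ω G (k, angleRoot k) :=
    contDiffAt_angleSum_uncurry (fun i => (hk i).ne') (angleRoot k)
  have hinv : (fderiv ℝ G (k, angleRoot k) ∘L .inr ℝ _ ℝ).IsInvertible := by
    refine ContinuousLinearMap.isInvertible_of_apply_one_ne_zero ?_
    have h := (hG.differentiableAt (by simp)).hasFDerivAt.comp_hasDerivAt (angleRoot k)
      ((hasDerivAt_const _ k).prodMk (hasDerivAt_id _))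
    rw [ContinuousLinearMap.comp_apply, ContinuousLinearMap.inr_apply,
      h.unique (hasDerivAt_angleSum (fun i => (hk i).ne') _)]
    have : Nonempty ι := Fintype.card_pos_iff.mp (by omega)
    exact (sum_div_sq_add_sq_pos hk _).ne'
  refine (hG.contDiffAt_implicitFunction (by simp) hinv).congr_of_eventuallyEq ?_
  filter_upwards [hG.eventually_apply_implicitFunction (by simp) hinv, eventually_pos_nhds hk]
    with k' hk'π hk'
  exact (eq_angleRoot_of_angleSum_eq hι hk' (hk'π.trans (angleSum_angleRoot hι hk))).symm

theorem hasDerivAt_angleRoot_update [DecidableEq ι] (hι : 2 < Fintype.card ι) {k : ι → ℝ}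
    (hk : ∀ i, 0 < k i) (i : ι) :
    HasDerivAt (fun t => angleRoot (update k i t))
      (angleRoot k / (k i ^ 2 + angleRoot k ^ 2) / ∑ j, k j / (k j ^ 2 + angleRoot k ^ 2))
      (k i) := by
  set s := angleRoot k
  have : Nonempty ι := Fintype.card_pos_iff.mp (by omega)
  have hdiff : DifferentiableAt ℝ angleRoot (update k i (k i)) := by
    rw [update_eq_self]; exact (contDiffAt_angleRoot hι hk).differentiableAt (by simp)
  obtain ⟨d, hd⟩ : ∃ d, HasDerivAt (fun t => angleRoot (update k i t)) d (k i) :=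
    ⟨_, hdiff.hasFDerivAt.comp_hasDerivAt (k i) (hasDerivAt_update k i (k i))⟩
  have hsum : HasDerivAt (fun t => angleSum (update k i t) (angleRoot (update k i t)))
      (∑ j, (d * k j - s * (Pi.single i 1 : ι → ℝ) j) / (k j ^ 2 + s ^ 2)) (k i) := by
    refine (HasDerivAt.fun_sum (u := .univ) fun j _ => hd.arctan_div
      (hasDerivAt_pi.1 (hasDerivAt_update k i (k i)) j) ?_).congr_deriv ?_
    · simpa using (hk j).ne'
    · simp [s]
  have hconst :
      HasDerivAt (fun t => angleSum (update k i t) (angleRoot (update k i t))) 0 (k i) := by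
    refine (hasDerivAt_const (k i) π).congr_of_eventuallyEq ?_
    have hupd := (continuous_const.update i continuous_id).tendsto' (k i) k (update_eq_self i k)
    filter_upwards [hupd.eventually (eventually_pos_nhds hk)] with t ht
    exact angleSum_angleRoot hι ht
  have key : d * ∑ j, k j / (k j ^ 2 + s ^ 2) = s / (k i ^ 2 + s ^ 2) := by
    have := hsum.unique hconst
    simpa [sub_div, Finset.sum_sub_distrib, mul_div_assoc, ← Finset.mul_sum, Pi.single_apply,
      ite_div, sub_eq_zero] using this
  rw [← eq_div_iff (sum_div_sq_add_sq_pos hk s).ne'] at key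
  exact key ▸ hd

noncomputable def perpCurvature (k : ι → ℝ) : ℝ := √(angleRoot k ^ 2 + 1)

theorem one_lt_perpCurvature (hι : 2 < Fintype.card ι) {k : ι → ℝ} (hk : ∀ i, 0 < k i) :
    1 < perpCurvature k := by
  have := angleRoot_pos hι hk
  rw [perpCurvature, lt_sqrt zero_le_one]
  nlinarith

theorem sqrt_perpCurvature_sq_sub_one (hι : 2 < Fintype.card ι) {k : ι → ℝ}
    (hk : ∀ i, 0 < k i) : √(perpCurvature k ^ 2 - 1) = angleRoot k := by
  rw [perpCurvature, sq_sqrt (by positivity), add_sub_cancel_right,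
    sqrt_sq (angleRoot_pos hι hk).le]

theorem sum_arctan_perpCurvature (hι : 2 < Fintype.card ι) {k : ι → ℝ} (hk : ∀ i, 0 < k i) :
    ∑ i, 2 * arctan (√(perpCurvature k ^ 2 - 1) / k i) = 2 * π := by
  rw [sqrt_perpCurvature_sq_sub_one hι hk, ← Finset.mul_sum]
  exact congrArg (2 * ·) (angleSum_angleRoot hι hk)

theorem contDiffAt_perpCurvature (hι : 2 < Fintype.card ι) {k : ι → ℝ} (hk : ∀ i, 0 < k i) :
    ContDiffAt ℝ ω perpCurvature k :=
  (((contDiffAt_angleRoot hι hk).pow 2).add contDiffAt_const).sqrt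
    (add_pos_of_nonneg_of_pos (sq_nonneg _) one_pos).ne'

theorem exists_pos_hasDerivAt_perpCurvature_update [DecidableEq ι] (hι : 2 < Fintype.card ι)
    {k : ι → ℝ} (hk : ∀ i, 0 < k i) (i : ι) :
    ∃ d, 0 < d ∧ HasDerivAt (fun t => perpCurvature (update k i t)) d (k i) := by
  have : Nonempty ι := Fintype.card_pos_iff.mp (by omega)
  have hs := angleRoot_pos hι hk
  have hB := sum_div_sq_add_sq_pos hk (angleRoot k)
  have h := ((hasDerivAt_angleRoot_update hι hk i).fun_pow 2).add_const 1 |>.sqrt (by positivity)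
  simp only [update_eq_self, Nat.cast_ofNat] at h
  exact ⟨_, by positivity, h⟩

end CirclePacking

open CirclePacking

/-- For `n ≥ 3`, the unique solution `k_P(k_1,…,k_n) > 1` of
`∑ i, 2·arctan(√((k')²−1)/k_i) = 2π` is a `C¹` function of `(k_1,…,k_n)` on the positive
orthant, and each partial derivative `∂k_P/∂k_i` is positive. -/
theorem stmt4 (n : ℕ) (hn : 3 ≤ n) :
    ∃ kP : (Fin n → ℝ) → ℝ,
      (∀ k : Fin n → ℝ, (∀ i, 0 < k i) →
        1 < kP k ∧
        ∑ i : Fin n, 2 * Real.arctan (Real.sqrt (kP k ^ 2 - 1) / k i) = 2 * Real.pi) ∧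
      ContDiffOn ℝ 1 kP {k : Fin n → ℝ | ∀ i, 0 < k i} ∧
      ∀ k : Fin n → ℝ, (∀ i, 0 < k i) → ∀ i : Fin n,
        ∃ d : ℝ, 0 < d ∧
          HasDerivAt (fun t : ℝ => kP (Function.update k i t)) d (k i) := by
  have hcard : 2 < Fintype.card (Fin n) := by rw [Fintype.card_fin]; omega
  refine ⟨perpCurvature,
    fun k hk => ⟨one_lt_perpCurvature hcard hk, sum_arctan_perpCurvature hcard hk⟩,
    fun k hk => ((contDiffAt_perpCurvature hcard hk).of_le le_top).contDiffWithinAt,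
    fun k hk i => exists_pos_hasDerivAt_perpCurvature_update hcard hk i⟩
end

section
/- In any generalized hyperbolic circle packing of an abstract n-gon, the total geodesic curvature L_{i,P} of each arc satisfies L_{i,P} < π. For the case k_i > 1 this reads: for all x > 1 and y > 1, (x/√(x²−1))·2·arctan(√(x²−1)/y) < π, and moreover lim_{x→+∞} (x/√(x²−1))·2·arctan(√(x²−1)/y) = π for fixed y > 1. -/
/-!
Jordan's inequality `sin θ ≥ 2θ/π` at `θ = arctan (s / y)`, with `s = √(x² - 1)`, gives
`2 arctan (s / y) ≤ π s / √(y² + s²)`, so the quantity is at most `π x / √(x² + y² - 1) < π`.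
The limit is the product of `x / √(x² - 1) → 1` and `2 arctan (√(x² - 1) / y) → π`.
-/

open Real Filter Topology

theorem Real.two_mul_arctan_le_pi_mul_div_sqrt {t : ℝ} (ht : 0 ≤ t) :
    2 * arctan t ≤ π * (t / √(1 + t ^ 2)) := by
  have jordan := mul_le_sin (arctan_nonneg.2 ht) (arctan_lt_pi_div_two t).le
  rw [sin_arctan] at jordan
  calc 2 * arctan t = π * (2 / π * arctan t) := by field_simp
    _ ≤ π * (t / √(1 + t ^ 2)) := by gcongr

theorem Real.two_mul_arctan_div_le {s y : ℝ} (hs : 0 ≤ s) (hy : 0 < y) :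
    2 * arctan (s / y) ≤ π * (s / √(y ^ 2 + s ^ 2)) := by
  have hsin : s / y / √(1 + (s / y) ^ 2) = s / √(y ^ 2 + s ^ 2) := by
    rw [show 1 + (s / y) ^ 2 = (y ^ 2 + s ^ 2) / y ^ 2 by field_simp,
      sqrt_div' _ (sq_nonneg y), sqrt_sq hy.le]
    field_simp
  simpa only [hsin] using two_mul_arctan_le_pi_mul_div_sqrt (div_nonneg hs hy.le)

theorem arc_curvature_lt_pi {x y : ℝ} (hx : 1 < x) (hy : 1 < y) :
    x / √(x ^ 2 - 1) * (2 * arctan (√(x ^ 2 - 1) / y)) < π := by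
  have hs : 0 < √(x ^ 2 - 1) := sqrt_pos.2 (by nlinarith)
  have hx_lt : x < √(y ^ 2 + √(x ^ 2 - 1) ^ 2) := by
    rw [sq_sqrt (by nlinarith)]
    exact lt_sqrt_of_sq_lt (by nlinarith)
  calc x / √(x ^ 2 - 1) * (2 * arctan (√(x ^ 2 - 1) / y))
      ≤ x / √(x ^ 2 - 1) * (π * (√(x ^ 2 - 1) / √(y ^ 2 + √(x ^ 2 - 1) ^ 2))) := by
        gcongr _ * ?_
        exact two_mul_arctan_div_le hs.le (by linarith)
    _ = π * (x / √(y ^ 2 + √(x ^ 2 - 1) ^ 2)) := by field_simp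
    _ < π := mul_lt_of_lt_one_right pi_pos ((div_lt_one (by linarith)).2 hx_lt)

theorem tendsto_div_sqrt_sq_sub_one_atTop :
    Tendsto (fun x : ℝ => x / √(x ^ 2 - 1)) atTop (𝓝 1) := by
  have h : Tendsto (fun x : ℝ => (√(1 - x⁻¹ ^ 2))⁻¹) atTop (𝓝 (√(1 - 0 ^ 2))⁻¹) :=
    ((tendsto_const_nhds.sub (tendsto_inv_atTop_zero.pow 2)).sqrt).inv₀ (by simp)
  rw [show (√(1 - (0:ℝ) ^ 2))⁻¹ = 1 by simp] at h
  refine h.congr' ?_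
  filter_upwards [eventually_gt_atTop 1] with x hx
  rw [show x ^ 2 - 1 = x ^ 2 * (1 - x⁻¹ ^ 2) by field_simp, sqrt_mul (sq_nonneg x),
    sqrt_sq (by linarith)]
  field_simp

theorem tendsto_arctan_sqrt_sq_sub_one_div_atTop {y : ℝ} (hy : 0 < y) :
    Tendsto (fun x : ℝ => arctan (√(x ^ 2 - 1) / y)) atTop (𝓝 (π / 2)) :=
  (tendsto_arctan_atTop.mono_right nhdsWithin_le_nhds).comp <|
    (tendsto_sqrt_atTop.comp <| tendsto_atTop_add_const_right _ _ <|
      tendsto_pow_atTop two_ne_zero).atTop_div_const hy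

/-- For all `x > 1`, `y > 1`: `(x/√(x²−1))·2·arctan(√(x²−1)/y) < π`, and for fixed
`y > 1` this quantity tends to `π` as `x → +∞`. -/
theorem stmt10 (y : ℝ) (hy : 1 < y) :
    (∀ x : ℝ, 1 < x →
      x / Real.sqrt (x ^ 2 - 1) * (2 * Real.arctan (Real.sqrt (x ^ 2 - 1) / y))
        < Real.pi) ∧
    Tendsto (fun x : ℝ =>
        x / Real.sqrt (x ^ 2 - 1) * (2 * Real.arctan (Real.sqrt (x ^ 2 - 1) / y)))
      atTop (nhds Real.pi) := by
  refine ⟨fun x hx => arc_curvature_lt_pi hx hy, ?_⟩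
  have h := tendsto_div_sqrt_sq_sub_one_atTop.mul
    ((tendsto_arctan_sqrt_sq_sub_one_div_atTop (by linarith : 0 < y)).const_mul 2)
  rwa [one_mul, mul_div_cancel₀ _ two_ne_zero] at h
end
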